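/- Let G be a k-regular simple graph on N vertices with averaging matrix A, let β̄ = (1/N)∑_{i=1}^N β_i, and let σ₂ ≥ 0 satisfy ‖Ax‖₂ ≤ σ₂‖x‖₂ for every x ∈ ℝ^N with ∑_i x_i = 0. Then for every β ∈ ℝ^N, (1 − σ₂²)·((k+1)/N)·∑_{i=1}^N (β_i − β̄)² ≤ max_{1 ≤ i ≤ N} ∑_{l ∈ {i} ∪ 𝒩_i} (β_l − (Aβ)_i)². -/

import Mathlib

/-!
Put `x = β - β̄`, so that `∑ x = 0`, and `(Aβ)ᵢ - β̄ = (Ax)ᵢ` because `A` fixes constant vectors.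
The closed neighbourhood of `i` has `k + 1` elements and `(Aβ)ᵢ` is the mean of `β` on it, so the
parallel-axis identity turns the `i`-th local sum into `∑_{l ∈ {i} ∪ 𝒩ᵢ} x_l² - (k + 1) (Ax)ᵢ²`.
Summing over `i` counts every `x_l²` exactly `k + 1` times, hence the local sums add up to
`(k + 1) (‖x‖² - ‖Ax‖²) ≥ (k + 1) (1 - σ₂²) ‖x‖²`, and their maximum is at least their average.
-/

noncomputable section

/-- The local consensus subspace `B_i = {β : β_i = β_k for all neighbors k of i}`. -/
def localConsensus {N : ℕ} (G : SimpleGraph (Fin N)) (i : Fin N) :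
    Submodule ℝ (EuclideanSpace ℝ (Fin N)) where
  carrier := {β | ∀ k, G.Adj i k → β i = β k}
  zero_mem' := by intro k _; rfl
  add_mem' := by
    intro a b ha hb k hk
    simp only [Set.mem_setOf_eq] at *
    simp [PiLp.add_apply, ha k hk, hb k hk]
  smul_mem' := by
    intro c a ha k hk
    simp only [Set.mem_setOf_eq] at *
    simp [PiLp.smul_apply, ha k hk]

/-- The averaging matrix of a `k`-regular graph: `A i j = 1/(k+1)` if `j = i` or `j ∈ 𝒩 i`. -/
def avgMatrix {N : ℕ} (G : SimpleGraph (Fin N)) [DecidableRel G.Adj] (k : ℕ) :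
    Matrix (Fin N) (Fin N) ℝ :=
  Matrix.of fun i j => if j = i ∨ G.Adj i j then (1 : ℝ) / (k + 1) else 0

open Finset Matrix

namespace Finset

variable {ι : Type*} (s : Finset ι) (f : ι → ℝ)

theorem sum_sub_sum_div_card : ∑ l ∈ s, (f l - (∑ j ∈ s, f j) / #s) = 0 := by
  rcases s.eq_empty_or_nonempty with rfl | hs
  · simp
  rw [sum_sub_distrib, sum_const, nsmul_eq_mul, mul_div_cancel₀ _ (by simp [hs.ne_empty]), sub_self]

/-- Parallel-axis identity. -/
theorem sum_sub_sq_eq_sum_sub_mean_sq_add (c : ℝ) :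
    ∑ l ∈ s, (f l - c) ^ 2 =
      ∑ l ∈ s, (f l - (∑ j ∈ s, f j) / #s) ^ 2 + #s * ((∑ j ∈ s, f j) / #s - c) ^ 2 := by
  set m := (∑ j ∈ s, f j) / #s
  have hexpand : ∀ l ∈ s, (f l - c) ^ 2 = (f l - m) ^ 2 + 2 * (m - c) * (f l - m) + (m - c) ^ 2 :=
    fun l _ => by ring
  rw [sum_congr rfl hexpand, sum_add_distrib, sum_add_distrib, ← mul_sum, sum_sub_sum_div_card,
    sum_const, nsmul_eq_mul]
  ring

end Finset

theorem Real.sum_div_card_le_iSup {ι : Type*} [Fintype ι] (f : ι → ℝ) :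
    (∑ i, f i) / Fintype.card ι ≤ ⨆ i, f i := by
  rcases isEmpty_or_nonempty ι with hι | hι
  · simp
  rw [div_le_iff₀ (by exact_mod_cast Fintype.card_pos), mul_comm, ← nsmul_eq_mul, ← Finset.card_univ]
  exact Finset.sum_le_card_nsmul _ _ _ fun i _ => le_ciSup (Finite.bddAbove_range f) i

theorem Matrix.sum_sq_mulVec_le {m n : Type*} [Fintype m] [Fintype n] [DecidableEq n]
    (M : Matrix m n ℝ) (x : n → ℝ) {σ : ℝ}
    (h : ‖toEuclideanLin M (WithLp.toLp 2 x)‖ ≤ σ * ‖WithLp.toLp 2 x‖) :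
    ∑ i, (M *ᵥ x) i ^ 2 ≤ σ ^ 2 * ∑ j, x j ^ 2 := by
  have := pow_le_pow_left₀ (norm_nonneg _) h 2
  rwa [mul_pow, EuclideanSpace.real_norm_sq_eq, EuclideanSpace.real_norm_sq_eq] at this

namespace SimpleGraph

variable {V : Type*} [Fintype V] [DecidableEq V] (G : SimpleGraph V) [DecidableRel G.Adj]

theorem mem_insert_neighborFinset_comm {i l : V} :
    l ∈ insert i (G.neighborFinset i) ↔ i ∈ insert l (G.neighborFinset l) := by
  simp only [Finset.mem_insert, mem_neighborFinset, eq_comm, G.adj_comm]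

variable {G} {k : ℕ}

theorem IsRegularOfDegree.card_insert_neighborFinset (hreg : G.IsRegularOfDegree k) (i : V) :
    #(insert i (G.neighborFinset i)) = k + 1 := by
  rw [Finset.card_insert_of_notMem (by simp), card_neighborFinset_eq_degree, hreg i]

/-- Double counting: each vertex lies in exactly `k + 1` closed neighbourhoods. -/
theorem IsRegularOfDegree.sum_sum_insert_neighborFinset (hreg : G.IsRegularOfDegree k)
    (f : V → ℝ) : ∑ i, ∑ l ∈ insert i (G.neighborFinset i), f l = (k + 1) * ∑ l, f l := by
  rw [sum_comm' (t' := univ) (s' := fun l => insert l (G.neighborFinset l))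
    fun i l => by simp only [mem_univ, true_and, and_true, G.mem_insert_neighborFinset_comm]]
  simp only [sum_const, hreg.card_insert_neighborFinset, nsmul_eq_mul, Nat.cast_add_one, mul_sum]

end SimpleGraph

theorem avgMatrix_mulVec_apply {N k : ℕ} (G : SimpleGraph (Fin N)) [DecidableRel G.Adj]
    (y : Fin N → ℝ) (i : Fin N) :
    (avgMatrix G k *ᵥ y) i = (∑ l ∈ insert i (G.neighborFinset i), y l) / (k + 1) := by
  simp only [mulVec, dotProduct, avgMatrix, of_apply, ite_mul, zero_mul]
  rw [← sum_filter, sum_div]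
  exact sum_congr (by ext; simp) fun l _ => by ring

theorem regularity_bound_sums_general {N k : ℕ} (G : SimpleGraph (Fin N)) [DecidableRel G.Adj]
    (hreg : G.IsRegularOfDegree k) (σ₂ : ℝ)
    (hσ : ∀ x : EuclideanSpace ℝ (Fin N), (∑ i, x i) = 0 →
      ‖Matrix.toEuclideanLin (avgMatrix G k) x‖ ≤ σ₂ * ‖x‖)
    (β : Fin N → ℝ) :
    (1 - σ₂ ^ 2) * (((k : ℝ) + 1) / N) * ∑ i, (β i - (∑ l, β l) / N) ^ 2 ≤
      ⨆ i : Fin N,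
        ∑ l ∈ insert i (G.neighborFinset i), (β l - (avgMatrix G k).mulVec β i) ^ 2 := by
  set b := (∑ l, β l) / N
  set x : Fin N → ℝ := fun l => β l - b
  set S : Fin N → ℝ := fun i =>
    ∑ l ∈ insert i (G.neighborFinset i), (β l - (avgMatrix G k).mulVec β i) ^ 2
  have hcard := hreg.card_insert_neighborFinset
  have hshift : ∀ i, (avgMatrix G k *ᵥ β) i - b = (avgMatrix G k *ᵥ x) i := fun i => by
    simp only [x, avgMatrix_mulVec_apply, sum_sub_distrib, sum_const, hcard, nsmul_eq_mul,
      Nat.cast_add_one]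
    field_simp
  have hlocal : ∀ i, ∑ l ∈ insert i (G.neighborFinset i), x l ^ 2 =
      S i + (k + 1) * (avgMatrix G k *ᵥ x) i ^ 2 := fun i => by
    have hmean : (avgMatrix G k *ᵥ β) i = (∑ l ∈ insert i (G.neighborFinset i), β l) /
        #(insert i (G.neighborFinset i)) := by
      rw [avgMatrix_mulVec_apply, hcard, Nat.cast_add_one]
    rw [sum_sub_sq_eq_sum_sub_mean_sq_add, ← hmean, hshift, hcard, Nat.cast_add_one]
  have hx : ∑ l, x l = 0 := by
    simpa only [card_univ, Fintype.card_fin] using sum_sub_sum_div_card univ β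
  have hspectral : ∑ i, (avgMatrix G k *ᵥ x) i ^ 2 ≤ σ₂ ^ 2 * ∑ l, x l ^ 2 :=
    sum_sq_mulVec_le _ _ (hσ _ hx)
  have htotal : (k + 1) * (1 - σ₂ ^ 2) * ∑ l, x l ^ 2 ≤ ∑ i, S i := by
    have hcount := hreg.sum_sum_insert_neighborFinset fun l => x l ^ 2
    simp only [hlocal, sum_add_distrib, ← mul_sum] at hcount
    have := mul_le_mul_of_nonneg_left hspectral (by positivity : (0 : ℝ) ≤ k + 1)
    linarith
  calc (1 - σ₂ ^ 2) * ((k + 1) / N) * ∑ l, x l ^ 2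
      = (k + 1) * (1 - σ₂ ^ 2) * (∑ l, x l ^ 2) / N := by ring
    _ ≤ (∑ i, S i) / N := div_le_div_of_nonneg_right htotal (Nat.cast_nonneg _)
    _ ≤ ⨆ i, S i := by simpa using Real.sum_div_card_le_iSup S

/-- for a `k`-regular graph with averaging matrix `A` and `σ₂ ≥ 0` bounding
`‖Ax‖₂ ≤ σ₂‖x‖₂` on the zero-sum subspace,
`(1 − σ₂²)((k+1)/N) ∑ᵢ (βᵢ − β̄)² ≤ maxᵢ ∑_{l ∈ {i} ∪ 𝒩ᵢ} (β_l − (Aβ)ᵢ)²`. -/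
theorem regularity_bound_sums {N k : ℕ} (G : SimpleGraph (Fin N)) [DecidableRel G.Adj]
    (hreg : G.IsRegularOfDegree k) (σ₂ : ℝ) (hσ₂ : 0 ≤ σ₂)
    (hσ : ∀ x : EuclideanSpace ℝ (Fin N), (∑ i, x i) = 0 →
      ‖Matrix.toEuclideanLin (avgMatrix G k) x‖ ≤ σ₂ * ‖x‖)
    (β : Fin N → ℝ) :
    (1 - σ₂ ^ 2) * (((k : ℝ) + 1) / N) * ∑ i, (β i - (∑ l, β l) / N) ^ 2 ≤
      ⨆ i : Fin N,
        ∑ l ∈ insert i (G.neighborFinset i), (β l - (avgMatrix G k).mulVec β i) ^ 2 :=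
  regularity_bound_sums_general G hreg σ₂ hσ β
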